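/- arXiv:1505.01312 — 5 statements merged into one kernel-verified Lean document; each statement's English description precedes it below -/
import Mathlib

section
/- Let A be a complex unital Banach algebra, let e, f ∈ A be invertible positive elements, and let a ∈ A be such that a^†_{e,f} exists. Then the following are equivalent: (i) a is weighted EP with weights e and f; (ii) there exist s, t ∈ A such that s x = 0 implies x = 0, t A = A, and a^†_{e,f} = s a = a t; (iii) there exist s₁, t₁ ∈ A such that a^†_{e,f} = s₁ a = a t₁. -/
/-!
Common definitions: hermitian and positive elements of a complex unital Banach
algebra, hermitian elements with respect to the equivalent norm induced by an
invertible positive element (weight), and the weighted Moore–Penrose inverse,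
both for Banach algebra elements and for bounded linear operators between
Banach spaces.
-/

noncomputable section

/-- An element `a` of a complex unital Banach algebra is hermitian if
`‖exp(i t a)‖ = 1` for all real `t`. -/
def IsHermitianEl {A : Type*} [NormedRing A] [NormedAlgebra ℂ A] (a : A) : Prop :=
  ∀ t : ℝ, ‖NormedSpace.exp ((Complex.I * (t : ℂ)) • a)‖ = 1

/-- An element of a complex unital Banach algebra is positive if it is hermitian
and its spectrum is contained in `[0, ∞)`. -/
def IsPositiveEl {A : Type*} [NormedRing A] [NormedAlgebra ℂ A] (a : A) : Prop :=
  IsHermitianEl a ∧ spectrum ℂ a ⊆ Complex.ofReal '' Set.Ici (0 : ℝ)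

/-- `a` is hermitian in `A^u`, i.e. hermitian for the equivalent norm
`‖x‖_u = ‖u^{1/2} x u^{-1/2}‖`, where `u^{1/2}` is the (unique) invertible
positive square root of the invertible positive weight `u`. -/
def IsHermitianWt {A : Type*} [NormedRing A] [NormedAlgebra ℂ A] (u a : A) : Prop :=
  ∃ s : Aˣ, IsPositiveEl (s : A) ∧ ((s : A)) ^ 2 = u ∧
    ∀ t : ℝ, ‖(s : A) * NormedSpace.exp ((Complex.I * (t : ℂ)) • a) * ((s⁻¹ : Aˣ) : A)‖ = 1

/-- `b` is the weighted Moore–Penrose inverse of `a` with weights `e` and `f`. -/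
def IsWMPI {A : Type*} [NormedRing A] [NormedAlgebra ℂ A] (e f a b : A) : Prop :=
  a * b * a = a ∧ b * a * b = b ∧ IsHermitianWt e (a * b) ∧ IsHermitianWt f (b * a)

/-- `a` is weighted EP with weights `e` and `f`. -/
def IsWEP {A : Type*} [NormedRing A] [NormedAlgebra ℂ A] (e f a : A) : Prop :=
  ∃ b : A, IsWMPI e f a b ∧ a * b = b * a

/-- `S ∈ L(Y,X)` is the weighted Moore–Penrose inverse of `T ∈ L(X,Y)` with
weights `E ∈ L(Y)` and `F ∈ L(X)`. -/
def IsWMPIop {X Y : Type*} [NormedAddCommGroup X] [NormedSpace ℂ X]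
    [NormedAddCommGroup Y] [NormedSpace ℂ Y]
    (E : Y →L[ℂ] Y) (F : X →L[ℂ] X) (T : X →L[ℂ] Y) (S : Y →L[ℂ] X) : Prop :=
  (T.comp S).comp T = T ∧ (S.comp T).comp S = S ∧
    IsHermitianWt E (T.comp S) ∧ IsHermitianWt F (S.comp T)

/-- `T ∈ L(X)` is weighted EP with weights `E` and `F`. -/
def IsWEPop {X : Type*} [NormedAddCommGroup X] [NormedSpace ℂ X]
    (E F T : X →L[ℂ] X) : Prop :=
  ∃ S : X →L[ℂ] X, IsWMPIop E F T S ∧ T.comp S = S.comp T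


/-!
The weighted Moore–Penrose inverse is unique, so `a` is weighted EP exactly when `a` commutes with
`a^†_{e,f}`. Uniqueness: the weighted-hermitian idempotents `a b`, `a c` have the same range and
`b a`, `c a` the same kernel. For a hermitian idempotent `p` the reflection `1 - 2p = exp(iπ p)` is
a contraction, so for idempotents `p, r` with the same range the product of the two reflections,
`1 + 2 (r - p)`, is a power-bounded unipotent and `p = r`. The two weighted norms agree because an
invertible positive square root is unique (`s x + x t = 0` forces `x = 0` when `σ s, σ t ⊆ (0, ∞)`).

If `a` commutes with its inverse `b`, then `g = b² + 1 - a b` is invertible, with inverse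
`a² + 1 - a b`, and `b = g a = a g`. Conversely `b = s a = a t` gives `b² a = b = a b²`, hence
`a b = a b² a = b a`.
-/

open scoped Pointwise

section Spectrum

lemma Subalgebra.spectrum_centralizer {R E : Type*} [CommRing R] [Ring E] [Algebra R E]
    (s : Set E) {x : E} (hx : x ∈ Subalgebra.centralizer R s) :
    spectrum R (⟨x, hx⟩ : Subalgebra.centralizer R s) = spectrum R x := by
  refine Set.Subset.antisymm (fun z hz => ?_)
    (spectrum.subset_subalgebra (⟨x, hx⟩ : Subalgebra.centralizer R s))
  contrapose! hz
  obtain ⟨u, hu⟩ := spectrum.notMem_iff.mp hz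
  have hu_mem : (u : E) ∈ Subalgebra.centralizer R s := by
    rw [hu]; exact sub_mem (Subalgebra.algebraMap_mem _ z) hx
  have hinv_mem : ((u⁻¹ : Eˣ) : E) ∈ Subalgebra.centralizer R s := fun g hg =>
    (Commute.units_inv_right (hu_mem g hg)).eq
  rw [spectrum.notMem_iff]
  refine ⟨⟨⟨u, hu_mem⟩, ⟨_, hinv_mem⟩, Subtype.ext u.mul_inv, Subtype.ext u.inv_mul⟩,
    Subtype.ext ?_⟩
  simp [hu]

/-- Characters of the (commutative, closed, inverse-closed) double centralizer of `{x, y}`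
realise every point of `σ (x + y)` as `χ x + χ y`. -/
lemma spectrum_add_subset_of_commute {E : Type*} [NormedRing E] [NormedAlgebra ℂ E]
    [CompleteSpace E] {x y : E} (hxy : Commute x y) :
    spectrum ℂ (x + y) ⊆ spectrum ℂ x + spectrum ℂ y := by
  let B := Subalgebra.centralizer ℂ (Subalgebra.centralizer ℂ ({x, y} : Set E) : Set E)
  have hxB : x ∈ B := Set.subset_centralizer_centralizer (by simp)
  have hyB : y ∈ B := Set.subset_centralizer_centralizer (by simp)
  have hcomm : ∀ u ∈ ({x, y} : Set E), ∀ v ∈ ({x, y} : Set E), u * v = v * u := by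
    rintro _ (rfl | rfl) _ (rfl | rfl) <;> simp [hxy.eq]
  let _ : NormedCommRing B :=
    { mul_comm := fun u v => Subtype.ext <|
        Set.centralizer_centralizer_comm_of_comm hcomm _ u.2 _ v.2 }
  have : CompleteSpace B := (Set.isClosed_centralizer _).completeSpace_coe
  intro z hz
  obtain ⟨χ, hχ⟩ := WeakDual.CharacterSpace.mem_spectrum_iff_exists.mp
    (spectrum.subset_subalgebra (⟨x, hxB⟩ + ⟨y, hyB⟩ : B) hz)
  refine ⟨χ ⟨x, hxB⟩, ?_, χ ⟨y, hyB⟩, ?_, hχ ▸ (map_add χ _ _).symm⟩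
  · rw [← Subalgebra.spectrum_centralizer _ hxB]
    exact AlgHom.apply_mem_spectrum χ _
  · rw [← Subalgebra.spectrum_centralizer _ hyB]
    exact AlgHom.apply_mem_spectrum χ _

lemma LinearMap.spectrum_apply_subset {R A E : Type*} [CommRing R] [Ring A] [Algebra R A]
    [Ring E] [Algebra R E] (φ : A →ₗ[R] E) (h1 : φ 1 = 1) (hunit : ∀ u : Aˣ, IsUnit (φ u))
    (a : A) : spectrum R (φ a) ⊆ spectrum R a := by
  intro z hz
  contrapose! hz
  obtain ⟨u, hu⟩ := spectrum.notMem_iff.mp hz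
  rw [spectrum.notMem_iff]
  convert hunit u using 1
  rw [hu, map_sub, Algebra.algebraMap_eq_smul_one, Algebra.algebraMap_eq_smul_one, map_smul, h1]

end Spectrum

section SquareRoot

variable {A : Type*} [NormedRing A] [NormedAlgebra ℂ A]

lemma ContinuousLinearMap.isUnit_mul (u : Aˣ) : IsUnit (ContinuousLinearMap.mul ℂ A u) :=
  ⟨⟨_, ContinuousLinearMap.mul ℂ A ↑u⁻¹, by ext; simp [← mul_assoc],
    by ext; simp [← mul_assoc]⟩, rfl⟩

lemma ContinuousLinearMap.isUnit_flip_mul (u : Aˣ) :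
    IsUnit ((ContinuousLinearMap.mul ℂ A).flip u) :=
  ⟨⟨_, (ContinuousLinearMap.mul ℂ A).flip ↑u⁻¹, by ext; simp [mul_assoc],
    by ext; simp [mul_assoc]⟩, rfl⟩

lemma eq_of_sq_eq_of_spectrum_subset [CompleteSpace A] {s t : A}
    (hs : spectrum ℂ s ⊆ Complex.ofReal '' Set.Ioi 0)
    (ht : spectrum ℂ t ⊆ Complex.ofReal '' Set.Ioi 0) (hst : s ^ 2 = t ^ 2) : s = t := by
  set L := ContinuousLinearMap.mul ℂ A s
  set R := (ContinuousLinearMap.mul ℂ A).flip t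
  have hLR : Commute L R := by ext x; simp [L, R, mul_assoc]
  have hunit : IsUnit (L + R) := by
    rw [← spectrum.zero_notMem_iff ℂ]
    intro h0
    obtain ⟨_, hl, _, hr, hlr⟩ := spectrum_add_subset_of_commute hLR h0
    obtain ⟨l, hl0, rfl⟩ := hs <| LinearMap.spectrum_apply_subset
      (ContinuousLinearMap.mul ℂ A).toLinearMap (by ext; simp)
      ContinuousLinearMap.isUnit_mul s hl
    obtain ⟨r, hr0, rfl⟩ := ht <| LinearMap.spectrum_apply_subset
      (ContinuousLinearMap.mul ℂ A).flip.toLinearMap (by ext; simp)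
      ContinuousLinearMap.isUnit_flip_mul t hr
    have : ((l + r : ℝ) : ℂ) = 0 := by push_cast; exact hlr
    rw [Complex.ofReal_eq_zero] at this
    linarith [Set.mem_Ioi.mp hl0, Set.mem_Ioi.mp hr0]
  have hker : (L + R) (s - t) = 0 := by
    simp only [_root_.add_apply, L, R, ContinuousLinearMap.mul_apply',
      ContinuousLinearMap.flip_apply]
    rw [sq, sq] at hst
    rw [mul_sub, sub_mul, hst]
    abel
  exact sub_eq_zero.mp <|
    (map_eq_zero_iff _ (ContinuousLinearMap.isUnit_iff_bijective.mp hunit).injective).mp hker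

lemma IsPositiveEl.spectrum_subset_Ioi {s : A} (hs : IsPositiveEl s) (hu : IsUnit s) :
    spectrum ℂ s ⊆ Complex.ofReal '' Set.Ioi 0 := by
  intro z hz
  obtain ⟨x, hx, rfl⟩ := hs.2 hz
  refine ⟨x, Set.mem_Ioi.mpr (lt_of_le_of_ne (Set.mem_Ici.mp hx) ?_), rfl⟩
  rintro rfl
  exact spectrum.zero_notMem ℂ hu (by simpa using hz)

end SquareRoot

section Reflection

variable {A : Type*} [NormedRing A] [NormedAlgebra ℂ A]

lemma IsIdempotentElem.exp_smul {p : A} (hp : IsIdempotentElem p) (z : ℂ) :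
    NormedSpace.exp (z • p) = 1 - p + Complex.exp z • p := by
  have hterm : ∀ n : ℕ, ((n.factorial : ℂ)⁻¹) • (z • p) ^ n
      = ((n.factorial : ℂ)⁻¹ * z ^ n) • p + Pi.single (M := fun _ => A) 0 (1 - p) n := by
    rintro (_ | n)
    · simp
    · rw [smul_pow, hp.pow_succ_eq, smul_smul]; simp
  have hsum := ((NormedSpace.exp_series_hasSum_exp' (𝕂 := ℂ) z).smul_const p).add
    (hasSum_pi_single 0 (1 - p))
  rw [← Complex.exp_eq_exp_ℂ] at hsum
  simp only [smul_eq_mul] at hsum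
  rw [NormedSpace.exp_eq_tsum ℂ, add_comm, ← hsum.tsum_eq]
  exact tsum_congr hterm

lemma IsIdempotentElem.exp_pi_mul_I_smul {p : A} (hp : IsIdempotentElem p) :
    NormedSpace.exp ((Complex.I * Real.pi) • p) = 1 - 2 * p := by
  rw [hp.exp_smul, mul_comm, Complex.exp_pi_mul_I, neg_one_smul, two_mul]
  abel

lemma eq_zero_of_mul_self_eq_zero_of_norm_pow_le {h : A} (hh : h * h = 0) {C : ℝ}
    (hC : ∀ n : ℕ, ‖(1 + h) ^ (n + 1)‖ ≤ C) : h = 0 := by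
  have hpow : ∀ n : ℕ, (1 + h) ^ n = 1 + (n : ℂ) • h := by
    intro n
    induction n with
    | zero => simp
    | succ n ih =>
      rw [pow_succ, ih, add_mul, one_mul, mul_add, mul_one, smul_mul_assoc, hh, smul_zero]
      push_cast
      rw [add_smul, one_smul]
      abel
  have hbound : ∀ n : ℕ, ((n + 1 : ℕ) : ℝ) * ‖h‖ ≤ C + ‖(1 : A)‖ := fun n =>
    calc ((n + 1 : ℕ) : ℝ) * ‖h‖ = ‖(1 + h) ^ (n + 1) - 1‖ := by
          rw [hpow, add_sub_cancel_left, norm_smul, Complex.norm_natCast]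
      _ ≤ ‖(1 + h) ^ (n + 1)‖ + ‖(1 : A)‖ := norm_sub_le _ _
      _ ≤ C + ‖(1 : A)‖ := by gcongr; exact hC n
  by_contra hne
  have hpos : 0 < ‖h‖ := norm_pos_iff.mpr hne
  obtain ⟨n, hn⟩ := exists_nat_gt ((C + ‖(1 : A)‖) / ‖h‖)
  have := hbound n
  rw [div_lt_iff₀ hpos] at hn
  push_cast at this
  nlinarith

lemma eq_of_norm_conj_reflection_le_one (S : Aˣ) {p r : A} (hp : IsIdempotentElem p)
    (hr : IsIdempotentElem r) (hpr : p * r = r) (hrp : r * p = p)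
    (hSp : ‖S * (1 - 2 * p) * ↑S⁻¹‖ ≤ 1) (hSr : ‖S * (1 - 2 * r) * ↑S⁻¹‖ ≤ 1) : p = r := by
  set h := 2 * (r - p)
  have hprod : (1 - 2 * p) * (1 - 2 * r) = 1 + h := by
    have : (1 - 2 * p) * (1 - 2 * r) = 1 - 2 * p - 2 * r + 4 * (p * r) := by noncomm_ring
    rw [this, hpr]; simp only [h]; noncomm_ring
  have hh : h * h = 0 := by
    have : h * h = 4 * (r * r - r * p - p * r + p * p) := by simp only [h]; noncomm_ring
    rw [this, hp.eq, hr.eq, hpr, hrp]; noncomm_ring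
  set x := S * (1 - 2 * p) * ↑S⁻¹ * (S * (1 - 2 * r) * ↑S⁻¹)
  have hx : x = S * (1 + h) * ↑S⁻¹ := by
    rw [← hprod]; simp only [x, mul_assoc, Units.inv_mul_cancel_left]
  have hxn : ∀ n : ℕ, ‖x ^ (n + 1)‖ ≤ 1 := fun n =>
    (norm_pow_le' x n.succ_pos).trans <| pow_le_one₀ (norm_nonneg _) <|
      (norm_mul_le _ _).trans (mul_le_one₀ hSp (norm_nonneg _) hSr)
  have hC : ∀ n : ℕ, ‖(1 + h) ^ (n + 1)‖ ≤ ‖(↑S⁻¹ : A)‖ * 1 * ‖(S : A)‖ := by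
    intro n
    have : (1 + h) ^ (n + 1) = ↑S⁻¹ * x ^ (n + 1) * S := by
      rw [hx, Units.conj_pow]
      simp only [mul_assoc, Units.inv_mul_cancel_left, Units.inv_mul, mul_one]
    rw [this]
    refine (norm_mul₃_le ..).trans ?_
    gcongr
    exact hxn n
  have h2 : (2 : ℂ) • (r - p) = 0 := by
    rw [two_smul, ← two_mul]; exact eq_zero_of_mul_self_eq_zero_of_norm_pow_le hh hC
  rw [smul_eq_zero, sub_eq_zero] at h2
  exact (h2.resolve_left two_ne_zero).symm

lemma eq_of_norm_conj_reflection_le_one' (S : Aˣ) {p r : A} (hp : IsIdempotentElem p)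
    (hr : IsIdempotentElem r) (hpr : p * r = p) (hrp : r * p = r)
    (hSp : ‖S * (1 - 2 * p) * ↑S⁻¹‖ ≤ 1) (hSr : ‖S * (1 - 2 * r) * ↑S⁻¹‖ ≤ 1) : p = r := by
  have hrefl : ∀ q : A, 1 - 2 * (1 - q) = -(1 - 2 * q) := fun q => by noncomm_ring
  have := eq_of_norm_conj_reflection_le_one S hp.one_sub hr.one_sub
    (by rw [sub_mul, one_mul, mul_sub, mul_one, hpr]; abel)
    (by rw [sub_mul, one_mul, mul_sub, mul_one, hrp]; abel)
    (by rwa [hrefl, mul_neg, neg_mul, norm_neg])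
    (by rwa [hrefl, mul_neg, neg_mul, norm_neg])
  simpa using this

end Reflection

section WeightedInverse

variable {A : Type*} [NormedRing A] [NormedAlgebra ℂ A] [CompleteSpace A]

lemma IsHermitianWt.exists_norm_conj_reflection_le_one {u p r : A} (hpu : IsHermitianWt u p)
    (hru : IsHermitianWt u r) (hp : IsIdempotentElem p) (hr : IsIdempotentElem r) :
    ∃ S : Aˣ, ‖S * (1 - 2 * p) * ↑S⁻¹‖ ≤ 1 ∧ ‖S * (1 - 2 * r) * ↑S⁻¹‖ ≤ 1 := by
  obtain ⟨S, hSpos, hSsq, hSp⟩ := hpu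
  obtain ⟨T, hTpos, hTsq, hTr⟩ := hru
  obtain rfl : S = T := Units.ext <| eq_of_sq_eq_of_spectrum_subset
    (hSpos.spectrum_subset_Ioi S.isUnit) (hTpos.spectrum_subset_Ioi T.isUnit) (hSsq.trans hTsq.symm)
  refine ⟨S, ?_, ?_⟩
  · rw [← hp.exp_pi_mul_I_smul, hSp Real.pi]
  · rw [← hr.exp_pi_mul_I_smul, hTr Real.pi]

lemma IsWMPI.unique {e f a b c : A} (hb : IsWMPI e f a b) (hc : IsWMPI e f a c) : b = c := by
  obtain ⟨hb₁, hb₂, hbe, hbf⟩ := hb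
  obtain ⟨hc₁, hc₂, hce, hcf⟩ := hc
  have hab : IsIdempotentElem (a * b) := by rw [IsIdempotentElem, ← mul_assoc, hb₁]
  have hac : IsIdempotentElem (a * c) := by rw [IsIdempotentElem, ← mul_assoc, hc₁]
  have hba : IsIdempotentElem (b * a) := by rw [IsIdempotentElem, ← mul_assoc, hb₂]
  have hca : IsIdempotentElem (c * a) := by rw [IsIdempotentElem, ← mul_assoc, hc₂]
  have hrange : a * b = a * c := by
    obtain ⟨S, hSb, hSc⟩ := hbe.exists_norm_conj_reflection_le_one hce hab hac
    exact eq_of_norm_conj_reflection_le_one S hab hac (by rw [← mul_assoc, hb₁])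
      (by rw [← mul_assoc, hc₁]) hSb hSc
  have hker : b * a = c * a := by
    obtain ⟨S, hSb, hSc⟩ := hbf.exists_norm_conj_reflection_le_one hcf hba hca
    exact eq_of_norm_conj_reflection_le_one' S hba hca
      (by rw [mul_assoc, ← mul_assoc a, hc₁]) (by rw [mul_assoc, ← mul_assoc a, hb₁]) hSb hSc
  calc b = b * (a * b) := by rw [← mul_assoc, hb₂]
    _ = c * a * c := by rw [hrange, ← mul_assoc, hker]
    _ = c := hc₂

lemma isWEP_iff_commute {e f a ad : A} (had : IsWMPI e f a ad) :
    IsWEP e f a ↔ Commute a ad :=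
  ⟨fun ⟨_, hb, hab⟩ => IsWMPI.unique had hb ▸ hab, fun h => ⟨ad, had, h⟩⟩

end WeightedInverse

section GroupInverse

variable {R : Type*} [Ring R] {a b : R}

lemma mul_self_add_one_sub_mul_eq_one (haba : a * b * a = a) (hbab : b * a * b = b)
    (hab : Commute a b) : (b * b + (1 - a * b)) * (a * a + (1 - a * b)) = 1 := by
  have e1 : b * b * (a * a) = a * b :=
    calc b * b * (a * a) = b * (a * b) * a := by rw [hab.eq]; noncomm_ring
      _ = b * a := by rw [← mul_assoc, hbab]
      _ = a * b := hab.eq.symm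
  have e2 : b * b * (a * b) = b * b := by
    rw [show b * b * (a * b) = b * (b * a * b) by noncomm_ring, hbab]
  have e3 : a * b * (a * a) = a * a := by rw [← mul_assoc, haba]
  have e4 : a * b * (a * b) = a * b := by rw [← mul_assoc, haba]
  calc (b * b + (1 - a * b)) * (a * a + (1 - a * b))
      = b * b * (a * a) + b * b - b * b * (a * b) + a * a + 1 - a * b - a * b * (a * a) - a * b
        + a * b * (a * b) := by noncomm_ring
    _ = 1 := by rw [e1, e2, e3, e4]; abel

lemma exists_isUnit_eq_mul_of_commute (haba : a * b * a = a) (hbab : b * a * b = b)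
    (hab : Commute a b) : ∃ g : R, IsUnit g ∧ b = g * a ∧ b = a * g := by
  have hgw := mul_self_add_one_sub_mul_eq_one haba hbab hab
  have hwg := mul_self_add_one_sub_mul_eq_one hbab haba hab.symm
  rw [← hab.eq] at hwg
  have hbba : b * b * a = b := by rw [mul_assoc, ← hab.eq, ← mul_assoc, hbab]
  have habb : a * b * b = b := by rw [hab.eq, hbab]
  have haab : a * a * b = a := by rw [mul_assoc, hab.eq, ← mul_assoc, haba]
  refine ⟨_, ⟨⟨_, _, hgw, hwg⟩, rfl⟩, ?_, ?_⟩
  · rw [add_mul, sub_mul, one_mul, hbba, haba, sub_self, add_zero]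
  · rw [mul_add, mul_sub, mul_one, ← mul_assoc, ← mul_assoc, habb, haab, sub_self, add_zero]

lemma commute_of_eq_mul_of_eq_mul {s t : R} (haba : a * b * a = a) (hs : b = s * a)
    (ht : b = a * t) : Commute a b := by
  have hbba : b * b * a = b :=
    calc b * b * a = s * a * b * a := by rw [← hs]
      _ = s * (a * b * a) := by noncomm_ring
      _ = b := by rw [haba, hs]
  have habb : a * b * b = b :=
    calc a * b * b = a * b * (a * t) := by rw [← ht]
      _ = a * b * a * t := by noncomm_ring
      _ = b := by rw [haba, ht]
  calc a * b = a * (b * b * a) := by rw [hbba]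
    _ = a * b * b * a := by noncomm_ring
    _ = b * a := by rw [habb]

end GroupInverse

theorem weighted_EP_iff_factorization_sa_general
    {A : Type*} [NormedRing A] [NormedAlgebra ℂ A] [CompleteSpace A]
    (e f a : A)
    (ad : A) (had : IsWMPI e f a ad) :
    (IsWEP e f a ↔
      ∃ s t : A, (∀ x : A, s * x = 0 → x = 0) ∧ (∀ y : A, ∃ x : A, t * x = y) ∧
        ad = s * a ∧ ad = a * t) ∧
    (IsWEP e f a ↔ ∃ s₁ t₁ : A, ad = s₁ * a ∧ ad = a * t₁) := by
  rw [isWEP_iff_commute had]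
  refine ⟨⟨fun h => ?_, fun ⟨_, _, _, _, hs, ht⟩ => commute_of_eq_mul_of_eq_mul had.1 hs ht⟩,
    ⟨fun h => ?_, fun ⟨_, _, hs, ht⟩ => commute_of_eq_mul_of_eq_mul had.1 hs ht⟩⟩
  all_goals obtain ⟨g, hg, hga, hag⟩ := exists_isUnit_eq_mul_of_commute had.1 had.2.1 h
  · refine ⟨g, g, fun x => hg.mul_right_eq_zero.mp, fun y => ⟨↑hg.unit⁻¹ * y, ?_⟩, hga, hag⟩
    rw [← mul_assoc, hg.mul_val_inv, one_mul]
  · exact ⟨g, g, hga, hag⟩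

/-- `a` is weighted EP with weights `e` and `f` iff `a^†_{e,f} = s a = a t` for
some left-injective `s` and left-surjective `t`, iff `a^†_{e,f} = s₁ a = a t₁`
for some `s₁, t₁ ∈ A`. -/
theorem weighted_EP_iff_factorization_sa
    {A : Type*} [NormedRing A] [NormedAlgebra ℂ A] [CompleteSpace A]
    (e f a : A)
    (he : IsPositiveEl e ∧ IsUnit e) (hf : IsPositiveEl f ∧ IsUnit f)
    (ad : A) (had : IsWMPI e f a ad) :
    (IsWEP e f a ↔
      ∃ s t : A, (∀ x : A, s * x = 0 → x = 0) ∧ (∀ y : A, ∃ x : A, t * x = y) ∧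
        ad = s * a ∧ ad = a * t) ∧
    (IsWEP e f a ↔ ∃ s₁ t₁ : A, ad = s₁ * a ∧ ad = a * t₁) :=
  weighted_EP_iff_factorization_sa_general e f a ad had
end
end

section
/- Let X₁ and X₂ be complex Banach spaces, let T₁ ∈ L(X₁) be a bounded linear isomorphism, let X be a complex Banach space, let E, F ∈ L(X) be invertible positive operators, and suppose there is a bounded linear isomorphism J : X₁ ⊕₁ X₂ → X such that T = J (T₁ ⊕ 0) J^{-1} ∈ L(X). Set T' = J (T₁^{-1} ⊕ 0) J^{-1} ∈ L(X). Then the following are equivalent: (i) T is weighted Moore–Penrose invertible with weights E and F and T^†_{E,F} = T'; (ii) T is weighted EP with weights E and F and T^†_{E,F} = T'; (iii) Q₁ = J (I_{X₁} ⊕ 0) J^{-1} ∈ H(L(X)^E) and Q₂ = J (0 ⊕ I_{X₂}) J^{-1} ∈ H(L(X)^F). -/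
/-!
Common definitions: hermitian and positive elements of a complex unital Banach
algebra, hermitian elements with respect to the equivalent norm induced by an
invertible positive element (weight), and the weighted Moore–Penrose inverse,
both for Banach algebra elements and for bounded linear operators between
Banach spaces.
-/

noncomputable section

/-- The direct sum operator `A₁ ⊕ A₂` on `X₁ ⊕₁ X₂` (the product with the
1-norm `‖x₁ ⊕ x₂‖ = ‖x₁‖ + ‖x₂‖`). -/
def dsumOp {X₁ X₂ : Type*} [NormedAddCommGroup X₁] [NormedSpace ℂ X₁]
    [NormedAddCommGroup X₂] [NormedSpace ℂ X₂]
    (A₁ : X₁ →L[ℂ] X₁) (A₂ : X₂ →L[ℂ] X₂) :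
    WithLp 1 (X₁ × X₂) →L[ℂ] WithLp 1 (X₁ × X₂) :=
  ((WithLp.prodContinuousLinearEquiv 1 ℂ X₁ X₂).symm.toContinuousLinearMap).comp
    ((A₁.prodMap A₂).comp
      (WithLp.prodContinuousLinearEquiv 1 ℂ X₁ X₂).toContinuousLinearMap)

/-!
Conjugation by `J` is an algebra isomorphism `L(X₁ ⊕₁ X₂) ≃ L(X)`, and `T₁ T₁⁻¹ = T₁⁻¹ T₁ = I`,
so `T T' = T' T = Q₁` and `Q₁ + Q₂ = I`. Hence the two Moore–Penrose equations and commutation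
hold automatically, and the remaining conditions `T T' ∈ H(L(X)^E)`, `T' T ∈ H(L(X)^F)` read
`Q₁ ∈ H(L(X)^E)`, `I - Q₂ ∈ H(L(X)^F)`; finally `a ↦ I - a` preserves `H(L(X)^F)`.
-/

section HermitianWt

variable {A : Type*} [NormedRing A] [NormedAlgebra ℂ A] [CompleteSpace A]

theorem NormedSpace.exp_algebraMap_add (z : ℂ) (a : A) :
    NormedSpace.exp (algebraMap ℂ A z + a) = NormedSpace.exp z • NormedSpace.exp a := by
  have hball : ∀ x : A, x ∈ Metric.eball (0 : A) (NormedSpace.expSeries ℂ A).radius := fun x =>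
    (NormedSpace.expSeries_radius_eq_top ℂ A).symm ▸ edist_lt_top _ _
  rw [NormedSpace.exp_add_of_commute_of_mem_ball (Algebra.commute_algebraMap_left z a)
      (hball _) (hball _),
    ← NormedSpace.algebraMap_exp_comm, Algebra.algebraMap_eq_smul_one, smul_one_mul]

/-- `exp (i t (1 - a)) = e^{i t} exp (i (-t) a)`, and the scalar `e^{i t}` has modulus one. -/
theorem IsHermitianWt.one_sub {u a : A} (h : IsHermitianWt u a) : IsHermitianWt u (1 - a) := by
  obtain ⟨s, hs, hsq, hnorm⟩ := h
  refine ⟨s, hs, hsq, fun t => ?_⟩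
  have hsplit : (Complex.I * (t : ℂ)) • (1 - a)
      = algebraMap ℂ A (Complex.I * t) + (Complex.I * ((-t : ℝ) : ℂ)) • a := by
    rw [Algebra.algebraMap_eq_smul_one]
    push_cast
    module
  rw [hsplit, NormedSpace.exp_algebraMap_add, mul_smul_comm, smul_mul_assoc, norm_smul,
    hnorm, mul_one, ← Complex.exp_eq_exp_ℂ, Complex.norm_exp_I_mul_ofReal]

theorem isHermitianWt_one_sub_iff {u a : A} : IsHermitianWt u (1 - a) ↔ IsHermitianWt u a :=
  ⟨fun h => sub_sub_cancel (1 : A) a ▸ h.one_sub, IsHermitianWt.one_sub⟩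

end HermitianWt

theorem isWMPIop_iff_of_comp_eq {X : Type*} [NormedAddCommGroup X] [NormedSpace ℂ X]
    [CompleteSpace X] {E F T S P Q : X →L[ℂ] X} (hTS : T.comp S = P) (hST : S.comp T = P)
    (hPT : P.comp T = T) (hPS : P.comp S = S) (hPQ : P + Q = 1) :
    IsWMPIop E F T S ↔ IsHermitianWt E P ∧ IsHermitianWt F Q := by
  rw [IsWMPIop, hTS, hST, hPT, hPS, eq_sub_of_add_eq' hPQ, isHermitianWt_one_sub_iff]
  simp

section DirectSum

variable {X₁ X₂ : Type*} [NormedAddCommGroup X₁] [NormedSpace ℂ X₁]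
  [NormedAddCommGroup X₂] [NormedSpace ℂ X₂]

theorem dsumOp_comp (A₁ B₁ : X₁ →L[ℂ] X₁) (A₂ B₂ : X₂ →L[ℂ] X₂) :
    (dsumOp A₁ A₂).comp (dsumOp B₁ B₂) = dsumOp (A₁.comp B₁) (A₂.comp B₂) := by
  ext x : 1
  simp [dsumOp, Prod.map]

theorem dsumOp_add (A₁ B₁ : X₁ →L[ℂ] X₁) (A₂ B₂ : X₂ →L[ℂ] X₂) :
    dsumOp A₁ A₂ + dsumOp B₁ B₂ = dsumOp (A₁ + B₁) (A₂ + B₂) := by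
  ext x : 1
  simp [dsumOp, Prod.map, ← WithLp.toLp_add]

theorem dsumOp_one : dsumOp (1 : X₁ →L[ℂ] X₁) (1 : X₂ →L[ℂ] X₂) = 1 :=
  rfl

end DirectSum

theorem weighted_EP_of_similarity_to_direct_sum_general
    {X₁ X₂ X : Type*}
    [NormedAddCommGroup X₁] [NormedSpace ℂ X₁]
    [NormedAddCommGroup X₂] [NormedSpace ℂ X₂]
    [NormedAddCommGroup X] [NormedSpace ℂ X] [CompleteSpace X]
    (T₁ : X₁ ≃L[ℂ] X₁) (E F : X →L[ℂ] X)
    (J : WithLp 1 (X₁ × X₂) ≃L[ℂ] X) (T T' : X →L[ℂ] X)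
    (hT : T = J.toContinuousLinearMap.comp
      ((dsumOp (T₁ : X₁ →L[ℂ] X₁) (0 : X₂ →L[ℂ] X₂)).comp
        J.symm.toContinuousLinearMap))
    (hT' : T' = J.toContinuousLinearMap.comp
      ((dsumOp ((T₁.symm : X₁ ≃L[ℂ] X₁) : X₁ →L[ℂ] X₁) (0 : X₂ →L[ℂ] X₂)).comp
        J.symm.toContinuousLinearMap)) :
    (IsWMPIop E F T T' ↔ (IsWMPIop E F T T' ∧ T.comp T' = T'.comp T)) ∧
    (IsWMPIop E F T T' ↔
      (IsHermitianWt E (J.toContinuousLinearMap.comp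
          ((dsumOp (1 : X₁ →L[ℂ] X₁) (0 : X₂ →L[ℂ] X₂)).comp
            J.symm.toContinuousLinearMap)) ∧
        IsHermitianWt F (J.toContinuousLinearMap.comp
          ((dsumOp (0 : X₁ →L[ℂ] X₁) (1 : X₂ →L[ℂ] X₂)).comp
            J.symm.toContinuousLinearMap)))) := by
  set C := J.conjContinuousAlgEquiv
  have hC (A) : J.toContinuousLinearMap.comp (A.comp J.symm.toContinuousLinearMap) = C A := rfl
  have hC_comp (A B) : (C A).comp (C B) = C (A.comp B) := (map_mul C A B).symm
  rw [hC] at hT hT'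
  simp only [hC]
  subst hT hT'
  have hTT' : (C (dsumOp T₁ 0)).comp (C (dsumOp T₁.symm 0)) = C (dsumOp 1 0) := by
    rw [hC_comp, dsumOp_comp]; simp [ContinuousLinearMap.one_def]
  have hT'T : (C (dsumOp T₁.symm 0)).comp (C (dsumOp T₁ 0)) = C (dsumOp 1 0) := by
    rw [hC_comp, dsumOp_comp]; simp [ContinuousLinearMap.one_def]
  have hPT : (C (dsumOp 1 0)).comp (C (dsumOp T₁ 0)) = C (dsumOp T₁ 0) := by
    rw [hC_comp, dsumOp_comp]; simp [ContinuousLinearMap.one_def]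
  have hPS : (C (dsumOp 1 0)).comp (C (dsumOp T₁.symm 0)) = C (dsumOp T₁.symm 0) := by
    rw [hC_comp, dsumOp_comp]; simp [ContinuousLinearMap.one_def]
  have hPQ : C (dsumOp 1 0) + C (dsumOp 0 1) = 1 := by
    rw [← map_add, dsumOp_add, add_zero, zero_add, dsumOp_one, map_one]
  exact ⟨(and_iff_left (hTT'.trans hT'T.symm)).symm,
    isWMPIop_iff_of_comp_eq hTT' hT'T hPT hPS hPQ⟩

/-- Proposition 4.1: with `T = J (T₁ ⊕ 0) J⁻¹` and `T' = J (T₁⁻¹ ⊕ 0) J⁻¹`,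
the following are equivalent: (i) `T` is weighted Moore–Penrose invertible
with weights `E, F` and `T^†_{E,F} = T'`; (ii) `T` is weighted EP with weights
`E, F` and `T^†_{E,F} = T'`; (iii) `Q₁ = J (I ⊕ 0) J⁻¹ ∈ H(L(X)^E)` and
`Q₂ = J (0 ⊕ I) J⁻¹ ∈ H(L(X)^F)`. -/
theorem weighted_EP_of_similarity_to_direct_sum
    {X₁ X₂ X : Type*}
    [NormedAddCommGroup X₁] [NormedSpace ℂ X₁] [CompleteSpace X₁]
    [NormedAddCommGroup X₂] [NormedSpace ℂ X₂] [CompleteSpace X₂]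
    [NormedAddCommGroup X] [NormedSpace ℂ X] [CompleteSpace X]
    (T₁ : X₁ ≃L[ℂ] X₁) (E F : X →L[ℂ] X)
    (hE : IsPositiveEl E ∧ IsUnit E) (hF : IsPositiveEl F ∧ IsUnit F)
    (J : WithLp 1 (X₁ × X₂) ≃L[ℂ] X) (T T' : X →L[ℂ] X)
    (hT : T = J.toContinuousLinearMap.comp
      ((dsumOp (T₁ : X₁ →L[ℂ] X₁) (0 : X₂ →L[ℂ] X₂)).comp
        J.symm.toContinuousLinearMap))
    (hT' : T' = J.toContinuousLinearMap.comp
      ((dsumOp ((T₁.symm : X₁ ≃L[ℂ] X₁) : X₁ →L[ℂ] X₁) (0 : X₂ →L[ℂ] X₂)).comp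
        J.symm.toContinuousLinearMap)) :
    (IsWMPIop E F T T' ↔ (IsWMPIop E F T T' ∧ T.comp T' = T'.comp T)) ∧
    (IsWMPIop E F T T' ↔
      (IsHermitianWt E (J.toContinuousLinearMap.comp
          ((dsumOp (1 : X₁ →L[ℂ] X₁) (0 : X₂ →L[ℂ] X₂)).comp
            J.symm.toContinuousLinearMap)) ∧
        IsHermitianWt F (J.toContinuousLinearMap.comp
          ((dsumOp (0 : X₁ →L[ℂ] X₁) (1 : X₂ →L[ℂ] X₂)).comp
            J.symm.toContinuousLinearMap)))) :=
  weighted_EP_of_similarity_to_direct_sum_general T₁ E F J T T' hT hT'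
end
end

section
/- Let X be a complex Banach space, let E, F ∈ L(X) be invertible positive operators, and let T ∈ L(X). Then T is weighted EP with weights E and F if and only if there exist complex Banach spaces X₁ and X₂, a bounded linear isomorphism T₁ ∈ L(X₁), an injective S ∈ L(X₁ ⊕₁ X₂, X), a surjective U ∈ L(X, X₁ ⊕₁ X₂), and an idempotent P ∈ H(L(X)^E) ∩ H(L(X)^F) such that T = S (T₁ ⊕ 0) U, R(P) = S(X₁ ⊕ 0) and N(P) = U^{-1}(0 ⊕ X₂). -/
/-!
Common definitions: hermitian and positive elements of a complex unital Banach
algebra, hermitian elements with respect to the equivalent norm induced by an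
invertible positive element (weight), and the weighted Moore–Penrose inverse,
both for Banach algebra elements and for bounded linear operators between
Banach spaces.
-/

noncomputable section

universe u

/-- A bundled complex Banach space (used to quantify existentially over Banach
spaces). -/
structure BanachC : Type (u + 1) where
  carrier : Type u
  [grp : NormedAddCommGroup carrier]
  [mod : NormedSpace ℂ carrier]
  [cpl : CompleteSpace carrier]

attribute [instance] BanachC.grp BanachC.mod BanachC.cpl

/-!
If `S` is the weighted Moore–Penrose inverse of `T` and commutes with it, then `P = T S = S T` is
an idempotent, hermitian for both weights, with range `R(T)` and null space `N(T)`. Conversely,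
such a `P` recovers the inverse: `T` restricts to a bijection of the closed subspace `R(P)`, hence
(open mapping) to an automorphism `T₁`, and `S = T₁⁻¹ P`.

A projection onto `R(T)` along `N(T)` is in turn the same thing as the factorization: under
`R(P) ⊕₁ N(P) ≅ X` the operator `T` becomes `T₁ ⊕ 0`, and conversely `T = S (T₁ ⊕ 0) U` has range
`S(X₁ ⊕ 0)` and null space `U⁻¹(0 ⊕ X₂)`.
-/

open ContinuousLinearMap

section RangeKerProjection

variable {𝕜 X : Type*} [NontriviallyNormedField 𝕜] [NormedAddCommGroup X] [NormedSpace 𝕜 X]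

structure IsRangeKerProjection (T P : X →L[𝕜] X) : Prop where
  isIdempotentElem : IsIdempotentElem P
  range_eq : P.range = T.range
  ker_eq : P.ker = T.ker

theorem isRangeKerProjection_comp {T S : X →L[𝕜] X} (hTST : (T ∘L S) ∘L T = T)
    (hcomm : T ∘L S = S ∘L T) : IsRangeKerProjection T (T ∘L S) where
  isIdempotentElem := by
    change (T ∘L S) ∘L (T ∘L S) = T ∘L S
    rw [← comp_assoc, hTST]
  range_eq := by
    refine le_antisymm (LinearMap.range_comp_le_range (S : X →ₗ[𝕜] X) (T : X →ₗ[𝕜] X)) ?_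
    conv_lhs => rw [← hTST]
    exact LinearMap.range_comp_le_range (T : X →ₗ[𝕜] X) ((T ∘L S : X →L[𝕜] X) : X →ₗ[𝕜] X)
  ker_eq := by
    rw [hcomm]
    refine le_antisymm ?_ (LinearMap.ker_le_ker_comp (T : X →ₗ[𝕜] X) (S : X →ₗ[𝕜] X))
    conv_rhs => rw [← hTST, comp_assoc]
    exact LinearMap.ker_le_ker_comp ((S ∘L T : X →L[𝕜] X) : X →ₗ[𝕜] X) (T : X →ₗ[𝕜] X)

namespace IsRangeKerProjection

variable {T P : X →L[𝕜] X} (hP : IsRangeKerProjection T P)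
include hP

theorem mem_range_iff {x : X} : x ∈ P.range ↔ P x = x :=
  LinearMap.IsIdempotentElem.mem_range_iff hP.isIdempotentElem.toLinearMap

theorem mem_ker_iff {x : X} : x ∈ P.ker ↔ T x = 0 := by
  rw [hP.ker_eq]; rfl

theorem apply_apply (x : X) : P (P x) = P x :=
  hP.mem_range_iff.mp ⟨x, rfl⟩

theorem apply_map (x : X) : P (T x) = T x :=
  hP.mem_range_iff.mp (hP.range_eq ▸ ⟨x, rfl⟩)

theorem map_apply (x : X) : T (P x) = T x := by
  have hx : T (x - P x) = 0 := by
    rw [← hP.mem_ker_iff, LinearMap.mem_ker, coe_coe, map_sub, hP.apply_apply, sub_self]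
  rw [map_sub, sub_eq_zero] at hx
  exact hx.symm

theorem mapsTo_range : ∀ x ∈ P.range, T x ∈ P.range :=
  fun x _ => hP.range_eq ▸ ⟨x, rfl⟩

theorem bijective_restrict : Function.Bijective (T.restrict hP.mapsTo_range) := by
  constructor
  · rw [injective_iff_map_eq_zero]
    rintro ⟨x, hx⟩ hTx
    have hPx : P x = 0 := LinearMap.mem_ker.mp (hP.mem_ker_iff.mpr (congrArg Subtype.val hTx))
    exact Subtype.ext ((hP.mem_range_iff.mp hx).symm.trans hPx)
  · rintro ⟨_, hy⟩
    obtain ⟨x, rfl⟩ := hP.range_eq ▸ hy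
    exact ⟨⟨P x, x, rfl⟩, Subtype.ext (hP.map_apply x)⟩

variable [CompleteSpace X]

def rangeEquiv : P.range ≃L[𝕜] P.range :=
  have := hP.isIdempotentElem.isClosed_range.completeSpace_coe
  .ofBijective (T.restrict hP.mapsTo_range)
    (LinearMap.ker_eq_bot_of_injective hP.bijective_restrict.injective)
    (LinearMap.range_eq_top_of_surjective _ hP.bijective_restrict.surjective)

@[simp]
theorem coe_rangeEquiv_apply (x : P.range) : (hP.rangeEquiv x : X) = T x :=
  rfl

theorem exists_inverse : ∃ S : X →L[𝕜] X, T ∘L S = P ∧ S ∘L T = P ∧ S ∘L P = S := by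
  set S : X →L[𝕜] X := P.range.subtypeL ∘L (hP.rangeEquiv.symm : P.range →L[𝕜] P.range) ∘L
    P.rangeRestrict
  have hS : ∀ x, S x = hP.rangeEquiv.symm (P.rangeRestrict x) := fun _ => rfl
  refine ⟨S, ext fun x => ?_, ext fun x => ?_, ext fun x => ?_⟩
  · rw [comp_apply, hS, ← hP.coe_rangeEquiv_apply, ContinuousLinearEquiv.apply_symm_apply]
    rfl
  · have : P.rangeRestrict (T x) = hP.rangeEquiv (P.rangeRestrict x) :=
      Subtype.ext ((hP.apply_map x).trans (hP.map_apply x).symm)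
    rw [comp_apply, hS, this, ContinuousLinearEquiv.symm_apply_apply]
    rfl
  · have : P.rangeRestrict (P x) = P.rangeRestrict x := Subtype.ext (hP.apply_apply x)
    rw [comp_apply, hS, hS, this]

end IsRangeKerProjection

end RangeKerProjection

section WeightedEP

variable {X : Type*} [NormedAddCommGroup X] [NormedSpace ℂ X] {E F T : X →L[ℂ] X}

theorem IsWEPop.exists_isRangeKerProjection (hT : IsWEPop E F T) :
    ∃ P, IsRangeKerProjection T P ∧ IsHermitianWt E P ∧ IsHermitianWt F P := by
  obtain ⟨S, ⟨hTST, -, hE, hF⟩, hcomm⟩ := hT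
  exact ⟨T ∘L S, isRangeKerProjection_comp hTST hcomm, hE, hcomm ▸ hF⟩

theorem IsRangeKerProjection.isWEPop [CompleteSpace X] {P : X →L[ℂ] X}
    (hP : IsRangeKerProjection T P) (hE : IsHermitianWt E P) (hF : IsHermitianWt F P) :
    IsWEPop E F T := by
  obtain ⟨S, hTS, hST, hSP⟩ := hP.exists_inverse
  refine ⟨S, ⟨?_, ?_, hTS ▸ hE, hST ▸ hF⟩, hTS.trans hST.symm⟩
  · rw [hTS]
    exact ext hP.apply_map
  · rw [comp_assoc, hTS, hSP]

theorem isWEPop_iff_exists_isRangeKerProjection [CompleteSpace X] :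
    IsWEPop E F T ↔ ∃ P, IsRangeKerProjection T P ∧ IsHermitianWt E P ∧ IsHermitianWt F P :=
  ⟨IsWEPop.exists_isRangeKerProjection, fun ⟨_, hP, hE, hF⟩ => hP.isWEPop hE hF⟩

end WeightedEP

section DirectSum

variable {X₁ X₂ : Type*} [NormedAddCommGroup X₁] [NormedSpace ℂ X₁]
  [NormedAddCommGroup X₂] [NormedSpace ℂ X₂]

theorem dsumOp_apply (A₁ : X₁ →L[ℂ] X₁) (A₂ : X₂ →L[ℂ] X₂) (v : WithLp 1 (X₁ × X₂)) :
    dsumOp A₁ A₂ v = WithLp.toLp 1 (Prod.map A₁ A₂ v.ofLp) :=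
  rfl

theorem range_dsumOp_zero {A : X₁ →L[ℂ] X₁} (hA : Function.Surjective A) :
    Set.range (dsumOp A (0 : X₂ →L[ℂ] X₂)) = {v | (WithLp.equiv 1 (X₁ × X₂) v).2 = 0} := by
  ext v
  constructor
  · rintro ⟨w, rfl⟩
    rfl
  · intro hv
    obtain ⟨a, ha⟩ := hA v.ofLp.1
    refine ⟨WithLp.toLp 1 (a, 0), ?_⟩
    rw [dsumOp_apply]
    refine WithLp.ofLp_injective 1 (Prod.ext ?_ ?_)
    · simpa using ha
    · simpa using hv.symm

theorem dsumOp_zero_eq_zero_iff {A : X₁ →L[ℂ] X₁} (hA : Function.Injective A)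
    {v : WithLp 1 (X₁ × X₂)} :
    dsumOp A (0 : X₂ →L[ℂ] X₂) v = 0 ↔ (WithLp.equiv 1 (X₁ × X₂) v).1 = 0 := by
  rw [dsumOp_apply, ← map_eq_zero_iff A hA]
  simp [← WithLp.ofLp_eq_zero, Prod.ext_iff]

end DirectSum

section Factorization

variable {X : Type u} [NormedAddCommGroup X] [NormedSpace ℂ X]
  {X₁ X₂ : Type*} [NormedAddCommGroup X₁] [NormedSpace ℂ X₁]
  [NormedAddCommGroup X₂] [NormedSpace ℂ X₂]

theorem isRangeKerProjection_of_factorization {T P : X →L[ℂ] X} {T₁ : X₁ ≃L[ℂ] X₁}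
    {S : WithLp 1 (X₁ × X₂) →L[ℂ] X} {U : X →L[ℂ] WithLp 1 (X₁ × X₂)}
    (hS : Function.Injective S) (hU : Function.Surjective U) (hP : P.comp P = P)
    (hT : T = S.comp ((dsumOp (T₁ : X₁ →L[ℂ] X₁) 0).comp U))
    (hrange : Set.range P = S '' {v | (WithLp.equiv 1 (X₁ × X₂) v).2 = 0})
    (hker : {x | P x = 0} = U ⁻¹' {v | (WithLp.equiv 1 (X₁ × X₂) v).1 = 0}) :
    IsRangeKerProjection T P where
  isIdempotentElem := hP
  range_eq := by
    refine SetLike.coe_injective ?_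
    rw [LinearMap.coe_range, LinearMap.coe_range, coe_coe, coe_coe, hrange, hT, coe_comp, coe_comp,
      Set.range_comp, hU.range_comp, range_dsumOp_zero T₁.surjective]
  ker_eq := by
    ext x
    have hx := Set.ext_iff.mp hker x
    rw [LinearMap.mem_ker, LinearMap.mem_ker, coe_coe, coe_coe, hT, comp_apply, comp_apply,
      map_eq_zero_iff S hS, dsumOp_zero_eq_zero_iff (A := (T₁ : X₁ →L[ℂ] X₁)) T₁.injective]
    exact hx

theorem IsRangeKerProjection.exists_factorization [CompleteSpace X] {T P : X →L[ℂ] X} (hP : IsRangeKerProjection T P) :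
    ∃ (V₁ V₂ : BanachC.{u}) (T₁ : V₁.carrier ≃L[ℂ] V₁.carrier)
      (S : WithLp 1 (V₁.carrier × V₂.carrier) →L[ℂ] X)
      (U : X →L[ℂ] WithLp 1 (V₁.carrier × V₂.carrier)),
      Function.Injective S ∧ Function.Surjective U ∧
      T = S.comp ((dsumOp (T₁ : V₁.carrier →L[ℂ] V₁.carrier) 0).comp U) ∧
      Set.range ⇑P =
        ⇑S '' {v : WithLp 1 (V₁.carrier × V₂.carrier) |
          (WithLp.equiv 1 (V₁.carrier × V₂.carrier) v).2 = 0} ∧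
      {x : X | P x = 0} =
        ⇑U ⁻¹' {v : WithLp 1 (V₁.carrier × V₂.carrier) |
          (WithLp.equiv 1 (V₁.carrier × V₂.carrier) v).1 = 0} := by
  have hcompl := hP.isIdempotentElem.isTopCompl
  have := hcompl.isClosed.completeSpace_coe
  have := hcompl.isClosed'.completeSpace_coe
  set Φ := (WithLp.prodContinuousLinearEquiv 1 ℂ P.range P.ker).trans
    (Submodule.prodEquivOfIsTopCompl P.range P.ker hcompl)
  refine ⟨⟨P.range⟩, ⟨P.ker⟩, hP.rangeEquiv, Φ, Φ.symm, Φ.injective, Φ.symm.surjective, ?_, ?_, ?_⟩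
  · -- `T (a + b) = T a` for `a ∈ R(P)`, `b ∈ N(P) = N(T)`
    ext x
    obtain ⟨v, rfl⟩ := Φ.surjective x
    simpa [Φ, dsumOp_apply, Submodule.prodEquivOfIsTopCompl_apply] using
      hP.mem_ker_iff.mp v.snd.2
  · rw [ContinuousLinearEquiv.coe_coe, Φ.image_eq_preimage_symm]
    ext x
    simp [Φ]
  · ext x
    simp [Φ]

end Factorization

theorem weighted_EP_iff_injective_surjective_factorization_general
    {X : Type u} [NormedAddCommGroup X] [NormedSpace ℂ X] [CompleteSpace X]
    (E F T : X →L[ℂ] X) :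
    IsWEPop E F T ↔
      ∃ (V₁ V₂ : BanachC.{u}) (T₁ : V₁.carrier ≃L[ℂ] V₁.carrier)
        (S : WithLp 1 (V₁.carrier × V₂.carrier) →L[ℂ] X)
        (U : X →L[ℂ] WithLp 1 (V₁.carrier × V₂.carrier))
        (P : X →L[ℂ] X),
        Function.Injective S ∧ Function.Surjective U ∧
        P.comp P = P ∧ IsHermitianWt E P ∧ IsHermitianWt F P ∧
        T = S.comp ((dsumOp (T₁ : V₁.carrier →L[ℂ] V₁.carrier) 0).comp U) ∧
        Set.range ⇑P =
          ⇑S '' {v : WithLp 1 (V₁.carrier × V₂.carrier) |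
            (WithLp.equiv 1 (V₁.carrier × V₂.carrier) v).2 = 0} ∧
        {x : X | P x = 0} =
          ⇑U ⁻¹' {v : WithLp 1 (V₁.carrier × V₂.carrier) |
            (WithLp.equiv 1 (V₁.carrier × V₂.carrier) v).1 = 0} := by
  rw [isWEPop_iff_exists_isRangeKerProjection]
  constructor
  · rintro ⟨P, hP, hE, hF⟩
    obtain ⟨V₁, V₂, T₁, S, U, hS, hU, hT, hrange, hker⟩ := hP.exists_factorization
    exact ⟨V₁, V₂, T₁, S, U, P, hS, hU, hP.isIdempotentElem, hE, hF, hT, hrange, hker⟩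
  · rintro ⟨V₁, V₂, T₁, S, U, P, hS, hU, hP, hE, hF, hT, hrange, hker⟩
    exact ⟨P, isRangeKerProjection_of_factorization hS hU hP hT hrange hker, hE, hF⟩

/-- Theorem 4.3: `T ∈ L(X)` is weighted EP with weights `E` and `F` iff there
exist Banach spaces `X₁, X₂`, an isomorphism `T₁ ∈ L(X₁)`, an injective
`S ∈ L(X₁ ⊕₁ X₂, X)`, a surjective `U ∈ L(X, X₁ ⊕₁ X₂)` and an idempotent
`P ∈ H(L(X)^E) ∩ H(L(X)^F)` with `T = S (T₁ ⊕ 0) U`, `R(P) = S(X₁ ⊕ 0)` and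
`N(P) = U⁻¹(0 ⊕ X₂)`. -/
theorem weighted_EP_iff_injective_surjective_factorization
    {X : Type u} [NormedAddCommGroup X] [NormedSpace ℂ X] [CompleteSpace X]
    (E F T : X →L[ℂ] X)
    (hE : IsPositiveEl E ∧ IsUnit E) (hF : IsPositiveEl F ∧ IsUnit F) :
    IsWEPop E F T ↔
      ∃ (V₁ V₂ : BanachC.{u}) (T₁ : V₁.carrier ≃L[ℂ] V₁.carrier)
        (S : WithLp 1 (V₁.carrier × V₂.carrier) →L[ℂ] X)
        (U : X →L[ℂ] WithLp 1 (V₁.carrier × V₂.carrier))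
        (P : X →L[ℂ] X),
        Function.Injective S ∧ Function.Surjective U ∧
        P.comp P = P ∧ IsHermitianWt E P ∧ IsHermitianWt F P ∧
        T = S.comp ((dsumOp (T₁ : V₁.carrier →L[ℂ] V₁.carrier) 0).comp U) ∧
        Set.range ⇑P =
          ⇑S '' {v : WithLp 1 (V₁.carrier × V₂.carrier) |
            (WithLp.equiv 1 (V₁.carrier × V₂.carrier) v).2 = 0} ∧
        {x : X | P x = 0} =
          ⇑U ⁻¹' {v : WithLp 1 (V₁.carrier × V₂.carrier) |
            (WithLp.equiv 1 (V₁.carrier × V₂.carrier) v).1 = 0} :=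
  weighted_EP_iff_injective_surjective_factorization_general E F T
end
end

section
/- Symmetry of weights for weighted EP operators: Let X be a complex Banach space, let E, F ∈ L(X) be invertible positive operators, and let T ∈ L(X). Then the following are equivalent: (i) T is weighted EP with weights E and F; (ii) T is weighted EP with weights F and E; (iii) T is weighted EP both with weights E and E and with weights F and F. -/
/-!
Common definitions: hermitian and positive elements of a complex unital Banach
algebra, hermitian elements with respect to the equivalent norm induced by an
invertible positive element (weight), and the weighted Moore–Penrose inverse,
both for Banach algebra elements and for bounded linear operators between
Banach spaces.
-/

noncomputable section

/-!
A weighted EP inverse `S` commutes with `T`, so the idempotents `TS` and `ST` coincide and the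
two hermiticity conditions may be exchanged or duplicated freely. Conversely, a commuting
inner-and-outer inverse is the group inverse, which is unique, so the inverses witnessing the
weights `E, E` and `F, F` are the same operator.
-/

theorem group_inverse_unique {M : Type*} [Monoid M] {a b c : M}
    (hab : a * b * a = a) (hba : b * a * b = b) (hb : a * b = b * a)
    (hac : a * c * a = a) (hca : c * a * c = c) (hc : a * c = c * a) :
    b = c := by
  have hproj : a * b = a * c :=
    calc a * b = a * c * (a * b) := by rw [← mul_assoc, hac]
      _ = c * (a * (b * a)) := by rw [hc, mul_assoc, hb]
      _ = a * c := by rw [← mul_assoc a b a, hab, hc]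
  calc b = b * (a * c) := by rw [← hproj, ← mul_assoc, hba]
    _ = c := by rw [← mul_assoc, ← hb, hproj, hc, hca]

section

variable {X : Type*} [NormedAddCommGroup X] [NormedSpace ℂ X] {E F T : X →L[ℂ] X}

theorem IsWEPop.symm (h : IsWEPop E F T) : IsWEPop F E T := by
  obtain ⟨S, ⟨hTST, hSTS, hE, hF⟩, hcomm⟩ := h
  exact ⟨S, ⟨hTST, hSTS, hcomm ▸ hF, hcomm.symm ▸ hE⟩, hcomm⟩

theorem IsWEPop.left (h : IsWEPop E F T) : IsWEPop E E T := by
  obtain ⟨S, ⟨hTST, hSTS, hE, -⟩, hcomm⟩ := h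
  exact ⟨S, ⟨hTST, hSTS, hE, hcomm ▸ hE⟩, hcomm⟩

theorem IsWEPop.right (h : IsWEPop E F T) : IsWEPop F F T :=
  h.symm.left

theorem IsWEPop.of_left_right (hE : IsWEPop E E T) (hF : IsWEPop F F T) : IsWEPop E F T := by
  obtain ⟨S, ⟨hTST, hSTS, hES, -⟩, hcomm⟩ := hE
  obtain ⟨S', ⟨hTST', hSTS', -, hFS'⟩, hcomm'⟩ := hF
  obtain rfl : S = S' := group_inverse_unique hTST hSTS hcomm hTST' hSTS' hcomm'
  exact ⟨S, ⟨hTST, hSTS, hES, hFS'⟩, hcomm⟩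

end

theorem weighted_EP_weights_symmetric_general
    {X : Type*} [NormedAddCommGroup X] [NormedSpace ℂ X]
    (E F T : X →L[ℂ] X) :
    (IsWEPop E F T ↔ IsWEPop F E T) ∧
    (IsWEPop E F T ↔ (IsWEPop E E T ∧ IsWEPop F F T)) :=
  ⟨⟨IsWEPop.symm, IsWEPop.symm⟩,
    ⟨fun h => ⟨h.left, h.right⟩, fun h => h.1.of_left_right h.2⟩⟩

/-- **Symmetry of weights for weighted EP operators.** `T` is weighted EP with
weights `E` and `F` iff it is weighted EP with weights `F` and `E`, iff it is
weighted EP both with weights `E, E` and with weights `F, F`. -/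
theorem weighted_EP_weights_symmetric
    {X : Type*} [NormedAddCommGroup X] [NormedSpace ℂ X] [CompleteSpace X]
    (E F T : X →L[ℂ] X)
    (hE : IsPositiveEl E ∧ IsUnit E) (hF : IsPositiveEl F ∧ IsUnit F) :
    (IsWEPop E F T ↔ IsWEPop F E T) ∧
    (IsWEPop E F T ↔ (IsWEPop E E T ∧ IsWEPop F F T)) :=
  weighted_EP_weights_symmetric_general E F T
end
end

section
/- Let A be a complex unital Banach algebra, let e, f ∈ A be invertible positive elements, and let a ∈ A. Then the following are equivalent: (i) a is weighted EP with weights e and f; (ii) there exist an invertible c ∈ A and an idempotent p ∈ A (p² = p) such that c p c^{-1} is hermitian in A^e and hermitian in A^f, p a p is invertible in the Banach algebra p A p with unit p (i.e. there exists b ∈ A with b = p b p and (p a p) b = b (p a p) = p), and a = c (p a p) c^{-1}; (iii) a is weighted EP with weights f and e; (iv) a is weighted EP both with weights e and e and with weights f and f. -/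
/-!
Common definitions: hermitian and positive elements of a complex unital Banach
algebra, hermitian elements with respect to the equivalent norm induced by an
invertible positive element (weight), and the weighted Moore–Penrose inverse,
both for Banach algebra elements and for bounded linear operators between
Banach spaces.
-/

noncomputable section

/-!
A commuting inner-outer inverse of `a` is its group inverse `a^#`, which is unique. Hence a
weighted EP element has `a^†_{e,f} = a^#`, and both weighted hermitian conditions concern the
single idempotent `p = a a^# = a^# a`: swapping the weights changes nothing, and uniqueness of
`a^#` lets the conditions for `(e, e)` and `(f, f)` be combined. Relative to `p`, the element
`a = p a p` is invertible in the corner `p A p` with inverse `a^#`; conversely, if `p a p` is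
invertible in `p A p` with inverse `b`, then `c b c⁻¹` is a group inverse of `c (p a p) c⁻¹`.
-/

theorem Units.conj_mul_conj {M : Type*} [Monoid M] (c : Mˣ) (x y : M) :
    c * x * ↑c⁻¹ * (c * y * ↑c⁻¹) = c * (x * y) * ↑c⁻¹ := by
  simp only [mul_assoc, Units.inv_mul_cancel_left]

def IsGroupInverse {M : Type*} [Semigroup M] (a b : M) : Prop :=
  a * b * a = a ∧ b * a * b = b ∧ a * b = b * a

namespace IsGroupInverse

section Semigroup

variable {M : Type*} [Semigroup M] {a b : M}

theorem isIdempotentElem_mul (h : IsGroupInverse a b) : IsIdempotentElem (a * b) := by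
  rw [IsIdempotentElem, ← mul_assoc, h.1]

theorem corner_eq_self (h : IsGroupInverse a b) : a * b * a * (a * b) = a := by
  rw [h.1, h.2.2, ← mul_assoc, h.1]

theorem corner_eq_inverse (h : IsGroupInverse a b) : a * b * b * (a * b) = b := by
  have hbb : a * b * b = b := by rw [h.2.2, h.2.1]
  rw [hbb, ← mul_assoc, h.2.1]

theorem unique {b₁ b₂ : M} (h₁ : IsGroupInverse a b₁) (h₂ : IsGroupInverse a b₂) :
    b₁ = b₂ := by
  obtain ⟨h₁aba, h₁bab, h₁comm⟩ := h₁
  obtain ⟨h₂aba, h₂bab, h₂comm⟩ := h₂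
  have hproj : a * b₁ = a * b₂ :=
    calc a * b₁ = a * b₂ * a * b₁ := by rw [h₂aba]
      _ = b₂ * a * (b₁ * a) := by rw [mul_assoc, h₂comm, h₁comm]
      _ = b₂ * (a * b₁ * a) := by simp only [mul_assoc]
      _ = a * b₂ := by rw [h₁aba, h₂comm]
  calc b₁ = b₁ * a * b₁ := h₁bab.symm
    _ = a * b₂ * b₂ := by rw [mul_assoc, hproj, ← mul_assoc, ← h₁comm, hproj]
    _ = b₂ := by rw [h₂comm, h₂bab]

theorem of_mul_eq_of_mul_eq {p x b : M} (hpx : p * x = x) (hpb : p * b = b)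
    (hxb : x * b = p) (hbx : b * x = p) : IsGroupInverse x b :=
  ⟨by rw [hxb, hpx], by rw [hbx, hpb], hxb.trans hbx.symm⟩

end Semigroup

theorem units_conj {M : Type*} [Monoid M] {a b : M} (h : IsGroupInverse a b) (c : Mˣ) :
    IsGroupInverse (c * a * ↑c⁻¹) (c * b * ↑c⁻¹) := by
  obtain ⟨haba, hbab, hcomm⟩ := h
  exact ⟨by rw [c.conj_mul_conj, c.conj_mul_conj, haba],
    by rw [c.conj_mul_conj, c.conj_mul_conj, hbab], by rw [c.conj_mul_conj, c.conj_mul_conj, hcomm]⟩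

end IsGroupInverse

section Weighted

variable {A : Type*} [NormedRing A] [NormedAlgebra ℂ A] {e f a : A}

theorem isWEP_iff_exists_isGroupInverse :
    IsWEP e f a ↔
      ∃ b, IsGroupInverse a b ∧ IsHermitianWt e (a * b) ∧ IsHermitianWt f (a * b) := by
  constructor
  · rintro ⟨b, ⟨haba, hbab, he, hf⟩, hcomm⟩
    exact ⟨b, ⟨haba, hbab, hcomm⟩, he, hcomm ▸ hf⟩
  · rintro ⟨b, ⟨haba, hbab, hcomm⟩, he, hf⟩
    exact ⟨b, ⟨haba, hbab, he, hcomm ▸ hf⟩, hcomm⟩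

theorem isWEP_comm : IsWEP e f a ↔ IsWEP f e a := by
  simp only [isWEP_iff_exists_isGroupInverse, and_comm (a := IsHermitianWt e _)]

theorem isWEP_iff_isWEP_self_and_isWEP_self :
    IsWEP e f a ↔ IsWEP e e a ∧ IsWEP f f a := by
  simp only [isWEP_iff_exists_isGroupInverse]
  constructor
  · rintro ⟨b, hb, he, hf⟩
    exact ⟨⟨b, hb, he, he⟩, ⟨b, hb, hf, hf⟩⟩
  · rintro ⟨⟨b₁, hb₁, he, -⟩, ⟨b₂, hb₂, hf, -⟩⟩
    exact ⟨b₁, hb₁, he, hb₁.unique hb₂ ▸ hf⟩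

theorem isWEP_iff_exists_units_conj_corner :
    IsWEP e f a ↔
      ∃ (c : Aˣ) (p : A), p * p = p ∧
        IsHermitianWt e ((c : A) * p * ((c⁻¹ : Aˣ) : A)) ∧
        IsHermitianWt f ((c : A) * p * ((c⁻¹ : Aˣ) : A)) ∧
        (∃ b : A, b = p * b * p ∧ (p * a * p) * b = p ∧ b * (p * a * p) = p) ∧
        a = (c : A) * (p * a * p) * ((c⁻¹ : Aˣ) : A) := by
  rw [isWEP_iff_exists_isGroupInverse]
  constructor
  · rintro ⟨b, hb, he, hf⟩
    have hcorner := hb.corner_eq_self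
    refine ⟨1, a * b, hb.isIdempotentElem_mul, by simpa using he, by simpa using hf,
      ⟨b, hb.corner_eq_inverse.symm, ?_, ?_⟩, by simp [hcorner]⟩
    · rw [hcorner]
    · rw [hcorner, hb.2.2]
  · rintro ⟨c, p, hp, he, hf, ⟨b, hb, hxb, hbx⟩, ha⟩
    have hpx : p * (p * a * p) = p * a * p := by rw [← mul_assoc, ← mul_assoc, hp]
    have hpb : p * b = b := by rw [hb, ← mul_assoc, ← mul_assoc, hp]
    have hcorner := IsGroupInverse.of_mul_eq_of_mul_eq hpx hpb hxb hbx
    have hab : a * (c * b * ↑c⁻¹) = c * p * ↑c⁻¹ := by rw [ha, c.conj_mul_conj, hxb]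
    refine ⟨c * b * ↑c⁻¹, ?_, hab ▸ he, hab ▸ hf⟩
    rw [ha]
    exact hcorner.units_conj c

end Weighted

theorem weighted_EP_iff_similarity_factorization_general
    {A : Type*} [NormedRing A] [NormedAlgebra ℂ A]
    (e f a : A) :
    (IsWEP e f a ↔
      ∃ (c : Aˣ) (p : A), p * p = p ∧
        IsHermitianWt e ((c : A) * p * ((c⁻¹ : Aˣ) : A)) ∧
        IsHermitianWt f ((c : A) * p * ((c⁻¹ : Aˣ) : A)) ∧
        (∃ b : A, b = p * b * p ∧ (p * a * p) * b = p ∧ b * (p * a * p) = p) ∧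
        a = (c : A) * (p * a * p) * ((c⁻¹ : Aˣ) : A)) ∧
    (IsWEP e f a ↔ IsWEP f e a) ∧
    (IsWEP e f a ↔ (IsWEP e e a ∧ IsWEP f f a)) :=
  ⟨isWEP_iff_exists_units_conj_corner, isWEP_comm, isWEP_iff_isWEP_self_and_isWEP_self⟩

/-- Theorem 4.5: `a` is weighted EP with weights `e` and `f` iff there exist an
invertible `c` and an idempotent `p` such that `c p c⁻¹` is hermitian in `A^e`
and in `A^f`, `p a p` is invertible in the Banach algebra `p A p` with unit
`p`, and `a = c (p a p) c⁻¹`; iff `a` is weighted EP with weights `f` and `e`;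
iff `a` is weighted EP both with weights `e, e` and with weights `f, f`. -/
theorem weighted_EP_iff_similarity_factorization
    {A : Type*} [NormedRing A] [NormedAlgebra ℂ A] [CompleteSpace A]
    (e f a : A)
    (he : IsPositiveEl e ∧ IsUnit e) (hf : IsPositiveEl f ∧ IsUnit f) :
    (IsWEP e f a ↔
      ∃ (c : Aˣ) (p : A), p * p = p ∧
        IsHermitianWt e ((c : A) * p * ((c⁻¹ : Aˣ) : A)) ∧
        IsHermitianWt f ((c : A) * p * ((c⁻¹ : Aˣ) : A)) ∧
        (∃ b : A, b = p * b * p ∧ (p * a * p) * b = p ∧ b * (p * a * p) = p) ∧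
        a = (c : A) * (p * a * p) * ((c⁻¹ : Aˣ) : A)) ∧
    (IsWEP e f a ↔ IsWEP f e a) ∧
    (IsWEP e f a ↔ (IsWEP e e a ∧ IsWEP f f a)) :=
  weighted_EP_iff_similarity_factorization_general e f a
end
end
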